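/- arXiv:math/0110252 — 3 statements merged into one kernel-verified Lean document; each statement's English description precedes it below -/
import Mathlib

section
/- Let φ : R^n → R be convex, positively homogeneous, nonnegative, nondecreasing in each variable, and exhaustive (φ(t) → ∞ as min_k t_k → ∞ along the positive orthant; equivalently φ > 0 outside the negative orthant's closure in the relevant sense). Let L = {t ∈ R^n : φ(t) = 1}, and for a compact subset F ⊆ L define Γ_F = {a ∈ R₊^n : sup_{t∈F} ⟨a,t⟩ = sup_{t∈L} ⟨a,t⟩ = 1} and Θ_F = {λa : 0 ≤ λ ≤ 1, a ∈ Γ_F}. Then Θ_F equals the gradient image ω(F, φ₁) = ⋃_{t⁰∈F} {a ∈ R^n : φ₁(t) ≥ 1 + ⟨a, t - t⁰⟩ for all t ∈ R^n}, where φ₁ = max(φ, 1). -/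
/-!
Since `φ` is sublinear, Hahn–Banach gives at every `t₀ ∈ L` a linear functional `a ≤ φ` with
`⟨a, t₀⟩ = 1`, and monotonicity makes `a ≥ 0`. Homogeneity and exhaustiveness turn
`⟨a, ·⟩ ≤ 1` on `L` into `⟨a, ·⟩ ≤ φ` for `a ≥ 0`. So if `a ∈ Γ_F` attains its maximum `1` on the
compact `F` at `t₀`, every `λa` with `0 ≤ λ ≤ 1` is a subgradient of `φ₁` at `t₀`. Conversely, a
subgradient `p` of `φ₁` at `t₀ ∈ F` is nonnegative, `λ = ⟨p, t₀⟩ ∈ [0, 1]` (test `t = 0` and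
`t = 2t₀`), and `p = λ (p / λ)` with `p / λ ∈ Γ_F` if `λ > 0`; if `λ = 0` then `p = 0`, which is
`0 • a` for the Hahn–Banach functional `a ∈ Γ_F`.
-/

open Set

section Sublinear

variable {E : Type*} [AddCommGroup E] [Module ℝ E] {N : E → ℝ}

lemma map_zero_of_pos_homogeneous (hhom : ∀ c : ℝ, 0 < c → ∀ x, N (c • x) = c * N x) :
    N 0 = 0 := by
  have h := hhom 2 two_pos 0
  rw [smul_zero] at h
  linarith

lemma ConvexOn.map_add_le_of_pos_homogeneous (hconv : ConvexOn ℝ univ N)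
    (hhom : ∀ c : ℝ, 0 < c → ∀ x, N (c • x) = c * N x) (x y : E) :
    N (x + y) ≤ N x + N y := by
  have hmid := hconv.2 (mem_univ x) (mem_univ y) (by norm_num : (0 : ℝ) ≤ 1 / 2)
    (by norm_num : (0 : ℝ) ≤ 1 / 2) (by norm_num)
  have hdouble := hhom 2 two_pos ((1 / 2 : ℝ) • x + (1 / 2 : ℝ) • y)
  rw [smul_add, smul_smul, smul_smul] at hdouble
  norm_num at hdouble hmid
  linarith

lemma exists_linearMap_le_eq_of_sublinear (hhom : ∀ c : ℝ, 0 < c → ∀ x, N (c • x) = c * N x)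
    (hadd : ∀ x y, N (x + y) ≤ N x + N y) (x₀ : E) :
    ∃ g : E →ₗ[ℝ] ℝ, g x₀ = N x₀ ∧ ∀ x, g x ≤ N x := by
  have hN0 := map_zero_of_pos_homogeneous hhom
  have hline : ∀ c : ℝ, c * N x₀ ≤ N (c • x₀) := by
    intro c
    rcases lt_trichotomy c 0 with hc | rfl | hc
    · have h := hadd (c • x₀) ((-c) • x₀)
      rw [← add_smul, add_neg_cancel, zero_smul, hN0, hhom _ (neg_pos.2 hc)] at h
      linarith
    · simp [hN0]
    · rw [hhom c hc]
  -- Hahn–Banach, starting from `c • x₀ ↦ c * N x₀` on the line through `x₀`.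
  let f : E →ₗ.[ℝ] ℝ := LinearPMap.mkSpanSingleton' x₀ (N x₀) fun c hc => by
    rcases smul_eq_zero.1 hc with rfl | rfl
    · exact zero_smul _ _
    · simp [hN0]
  obtain ⟨g, hgf, hgN⟩ := exists_extension_of_le_sublinear f N hhom hadd (by
    rintro ⟨x, hx⟩
    obtain ⟨c, rfl⟩ := Submodule.mem_span_singleton.1 hx
    simpa only [f, LinearPMap.mkSpanSingleton'_apply, RingHom.id_apply, smul_eq_mul] using
      hline c)
  exact ⟨g, (hgf ⟨x₀, Submodule.mem_span_singleton_self x₀⟩).trans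
    (LinearPMap.mkSpanSingleton'_apply_self _ _ _ _), hgN⟩

end Sublinear

section DotProduct

variable {ι : Type*} [Fintype ι]

lemma nonneg_of_subgradient_of_monotone [DecidableEq ι] {ψ : (ι → ℝ) → ℝ} (hψ : Monotone ψ)
    {a t₀ : ι → ℝ} (h : ∀ t, ψ t₀ + a ⬝ᵥ (t - t₀) ≤ ψ t) : 0 ≤ a := by
  intro i
  have hi := h (t₀ - Pi.single i 1)
  have hle : ψ (t₀ - Pi.single i 1) ≤ ψ t₀ :=
    hψ (sub_le_self _ (Pi.single_nonneg.2 zero_le_one))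
  rw [sub_sub_cancel_left, dotProduct_neg, dotProduct_single, mul_one] at hi
  simp only [Pi.zero_apply]
  linarith

lemma eq_zero_of_forall_dotProduct_nonpos {a : ι → ℝ} (h : ∀ t, a ⬝ᵥ t ≤ 0) : a = 0 :=
  dotProduct_self_eq_zero.1 (le_antisymm (h a) (by simpa using dotProduct_star_self_nonneg a))

variable {φ : (ι → ℝ) → ℝ}

lemma exists_dotProduct_eq_le_of_sublinear [DecidableEq ι]
    (hhom : ∀ c : ℝ, 0 < c → ∀ t, φ (c • t) = c * φ t)
    (hadd : ∀ s t, φ (s + t) ≤ φ s + φ t) (t₀ : ι → ℝ) :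
    ∃ a : ι → ℝ, a ⬝ᵥ t₀ = φ t₀ ∧ ∀ t, a ⬝ᵥ t ≤ φ t := by
  obtain ⟨g, hgt₀, hg⟩ := exists_linearMap_le_eq_of_sublinear hhom hadd t₀
  have hrep : ∀ t, (dotProductEquiv ℝ ι).symm g ⬝ᵥ t = g t := fun t => by
    rw [← dotProductEquiv_apply_apply, LinearEquiv.apply_symm_apply]
  exact ⟨(dotProductEquiv ℝ ι).symm g, by rw [hrep, hgt₀], fun t => (hrep t).trans_le (hg t)⟩

end DotProduct

section LevelSet

variable {ι : Type*} [Fintype ι] {φ : (ι → ℝ) → ℝ}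

lemma dotProduct_le_mul_of_le_on_levelSet (hhom : ∀ c : ℝ, 0 < c → ∀ t, φ (c • t) = c * φ t)
    (hnonneg : ∀ t, 0 ≤ φ t) (hexh : ∀ t : ι → ℝ, ¬ (∀ i, t i ≤ 0) → 0 < φ t)
    {a : ι → ℝ} (ha : 0 ≤ a) {c : ℝ} (hc : 0 ≤ c) (hL : ∀ t, φ t = 1 → a ⬝ᵥ t ≤ c)
    (t : ι → ℝ) : a ⬝ᵥ t ≤ c * φ t := by
  by_cases hneg : ∀ i, t i ≤ 0
  · calc a ⬝ᵥ t ≤ 0 := Finset.sum_nonpos fun i _ => mul_nonpos_of_nonneg_of_nonpos (ha i) (hneg i)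
      _ ≤ c * φ t := mul_nonneg hc (hnonneg t)
  · have hpos := hexh t hneg
    have hnorm : φ ((φ t)⁻¹ • t) = 1 := by
      rw [hhom _ (inv_pos.2 hpos), inv_mul_cancel₀ hpos.ne']
    have h := hL _ hnorm
    rw [dotProduct_smul, smul_eq_mul, inv_mul_le_iff₀ hpos] at h
    linarith

lemma exists_nonneg_dotProduct_eq_one_le [DecidableEq ι] (hconv : ConvexOn ℝ univ φ)
    (hhom : ∀ c : ℝ, 0 < c → ∀ t, φ (c • t) = c * φ t) (hmono : Monotone φ)
    {t₀ : ι → ℝ} (ht₀ : φ t₀ = 1) :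
    ∃ a : ι → ℝ, 0 ≤ a ∧ a ⬝ᵥ t₀ = 1 ∧ ∀ t, a ⬝ᵥ t ≤ φ t := by
  obtain ⟨a, hat₀, ha⟩ :=
    exists_dotProduct_eq_le_of_sublinear hhom (hconv.map_add_le_of_pos_homogeneous hhom) t₀
  refine ⟨a, nonneg_of_subgradient_of_monotone hmono (t₀ := t₀) fun t => ?_, hat₀.trans ht₀, ha⟩
  rw [dotProduct_sub, hat₀]
  linarith [ha t]

/-- `Γ_F`. Since `sSup` of an empty or unbounded set of reals is `0`, the conditions `sSup _ = 1`
also say that the sets are nonempty and bounded above. -/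
def gammaSet (φ : (ι → ℝ) → ℝ) (F : Set (ι → ℝ)) : Set (ι → ℝ) :=
  {a | (∀ i, 0 ≤ a i) ∧ sSup ((fun t => a ⬝ᵥ t) '' F) = 1 ∧
    sSup ((fun t => a ⬝ᵥ t) '' {t | φ t = 1}) = 1}

variable {F : Set (ι → ℝ)} {a : ι → ℝ}

lemma mem_gammaSet_of_dotProduct_eq_one (hFL : F ⊆ {t | φ t = 1}) {t₀ : ι → ℝ} (ht₀ : t₀ ∈ F)
    (ha : 0 ≤ a) (hat₀ : a ⬝ᵥ t₀ = 1) (hL : ∀ t, φ t = 1 → a ⬝ᵥ t ≤ 1) : a ∈ gammaSet φ F := by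
  have hgreatest : ∀ S : Set (ι → ℝ), t₀ ∈ S → S ⊆ {t | φ t = 1} →
      IsGreatest ((fun t => a ⬝ᵥ t) '' S) 1 := fun S hS hSL =>
    ⟨⟨t₀, hS, hat₀⟩, by rintro _ ⟨t, ht, rfl⟩; exact hL t (hSL ht)⟩
  exact ⟨ha, (hgreatest F ht₀ hFL).csSup_eq, (hgreatest _ (hFL ht₀) subset_rfl).csSup_eq⟩

lemma dotProduct_le_one_of_mem_gammaSet (ha : a ∈ gammaSet φ F) {t : ι → ℝ} (ht : φ t = 1) :
    a ⬝ᵥ t ≤ 1 := by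
  have hbdd : BddAbove ((fun t => a ⬝ᵥ t) '' {t | φ t = 1}) := by
    by_contra h
    simpa [Real.sSup_of_not_bddAbove h] using ha.2.2
  exact ha.2.2 ▸ le_csSup hbdd ⟨t, ht, rfl⟩

lemma exists_dotProduct_eq_one_of_mem_gammaSet (hFc : IsCompact F) (ha : a ∈ gammaSet φ F) :
    ∃ t₀ ∈ F, a ⬝ᵥ t₀ = 1 := by
  have hne : ((fun t => a ⬝ᵥ t) '' F).Nonempty := by
    by_contra h
    simpa [Set.not_nonempty_iff_eq_empty.1 h] using ha.2.1
  have hcont : Continuous fun t : ι → ℝ => a ⬝ᵥ t := by fun_prop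
  obtain ⟨t₀, ht₀, hmax⟩ := (hFc.image hcont).sSup_mem hne
  exact ⟨t₀, ht₀, hmax.trans ha.2.1⟩

end LevelSet

section GradientImage

variable {ι : Type*} [Fintype ι] {φ : (ι → ℝ) → ℝ} {t₀ p : ι → ℝ}

lemma one_add_smul_dotProduct_sub_le_max {a : ι → ℝ} {l : ℝ} (hl₀ : 0 ≤ l) (hl₁ : l ≤ 1)
    (ha : ∀ t, a ⬝ᵥ t ≤ φ t) (hat₀ : a ⬝ᵥ t₀ = 1) (t : ι → ℝ) :
    1 + (l • a) ⬝ᵥ (t - t₀) ≤ max (φ t) 1 := by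
  rw [smul_dotProduct, dotProduct_sub, hat₀, smul_eq_mul]
  rcases le_total (a ⬝ᵥ t) 1 with h | h
  · nlinarith [le_max_right (φ t) 1]
  · nlinarith [ha t, le_max_left (φ t) 1]

lemma dotProduct_mem_Icc_of_subgradient (hhom : ∀ c : ℝ, 0 < c → ∀ t, φ (c • t) = c * φ t)
    (ht₀ : φ t₀ = 1) (hp : ∀ t, 1 + p ⬝ᵥ (t - t₀) ≤ max (φ t) 1) :
    p ⬝ᵥ t₀ ∈ Icc 0 1 := by
  have h₀ := hp 0
  have h₂ := hp ((2 : ℝ) • t₀)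
  rw [map_zero_of_pos_homogeneous hhom, zero_sub, dotProduct_neg, max_eq_right zero_le_one] at h₀
  rw [hhom 2 two_pos, ht₀, dotProduct_sub, dotProduct_smul, smul_eq_mul,
    mul_one, max_eq_left one_le_two] at h₂
  constructor <;> linarith

lemma exists_smul_mem_gammaSet_of_subgradient [DecidableEq ι] (hconv : ConvexOn ℝ univ φ)
    (hhom : ∀ c : ℝ, 0 < c → ∀ t, φ (c • t) = c * φ t) (hnonneg : ∀ t, 0 ≤ φ t)
    (hmono : Monotone φ) (hexh : ∀ t : ι → ℝ, ¬ (∀ i, t i ≤ 0) → 0 < φ t)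
    {F : Set (ι → ℝ)} (hFL : F ⊆ {t | φ t = 1}) (ht₀F : t₀ ∈ F)
    (hp : ∀ t, 1 + p ⬝ᵥ (t - t₀) ≤ max (φ t) 1) :
    ∃ (l : ℝ) (a : ι → ℝ), 0 ≤ l ∧ l ≤ 1 ∧ a ∈ gammaSet φ F ∧ p = l • a := by
  have ht₀ : φ t₀ = 1 := hFL ht₀F
  have hp₀ : 0 ≤ p := nonneg_of_subgradient_of_monotone (hmono.max (monotone_const (c := 1)))
    (t₀ := t₀) fun t => by simpa only [ht₀, max_self] using hp t
  obtain ⟨hl₀, hl₁⟩ := dotProduct_mem_Icc_of_subgradient hhom ht₀ hp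
  have hpL : ∀ t, φ t = 1 → p ⬝ᵥ t ≤ p ⬝ᵥ t₀ := fun t ht => by
    have h := hp t
    rw [ht, max_self, dotProduct_sub] at h
    linarith
  rcases hl₀.eq_or_lt with hl | hl
  · obtain ⟨a, ha₀, hat₀, ha⟩ := exists_nonneg_dotProduct_eq_one_le hconv hhom hmono ht₀
    refine ⟨0, a, le_rfl, zero_le_one,
      mem_gammaSet_of_dotProduct_eq_one hFL ht₀F ha₀ hat₀ fun t ht => ht ▸ ha t, ?_⟩
    rw [zero_smul]
    exact eq_zero_of_forall_dotProduct_nonpos fun t => by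
      simpa using dotProduct_le_mul_of_le_on_levelSet hhom hnonneg hexh hp₀ le_rfl (hl ▸ hpL) t
  · refine ⟨p ⬝ᵥ t₀, (p ⬝ᵥ t₀)⁻¹ • p, hl₀, hl₁, mem_gammaSet_of_dotProduct_eq_one hFL ht₀F
      (smul_nonneg (inv_nonneg.2 hl₀) hp₀) ?_ fun t ht => ?_, ?_⟩
    · rw [smul_dotProduct, smul_eq_mul, inv_mul_cancel₀ hl.ne']
    · rw [smul_dotProduct, smul_eq_mul, inv_mul_le_one₀ hl]
      exact hpL t ht
    · rw [smul_smul, mul_inv_cancel₀ hl.ne', one_smul]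

end GradientImage

/-- For a convex, positively homogeneous, nonnegative, coordinatewise nondecreasing and
exhaustive function `φ` with level set `L = {φ = 1}`, and a compact `F ⊆ L`, the set
`Θ_F = {λa : 0 ≤ λ ≤ 1, a ∈ Γ_F}` equals the gradient image `ω(F, φ₁)` of `F` under
`φ₁ = max(φ,1)`. -/
theorem thetaF_eq_gradient_image {n : ℕ} (φ : (Fin n → ℝ) → ℝ)
    (hconv : ConvexOn ℝ Set.univ φ)
    (hhom : ∀ c : ℝ, 0 < c → ∀ t, φ (c • t) = c * φ t)
    (hnonneg : ∀ t, 0 ≤ φ t)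
    (hmono : ∀ s t : Fin n → ℝ, (∀ i, s i ≤ t i) → φ s ≤ φ t)
    (hexh : ∀ t : Fin n → ℝ, ¬ (∀ i, t i ≤ 0) → 0 < φ t)
    (F : Set (Fin n → ℝ)) (hFc : IsCompact F) (hFL : F ⊆ {t | φ t = 1}) :
    {p : Fin n → ℝ | ∃ l : ℝ, ∃ a : Fin n → ℝ, 0 ≤ l ∧ l ≤ 1 ∧
        ((∀ i, 0 ≤ a i) ∧
          sSup ((fun t => ∑ i, a i * t i) '' F) = 1 ∧
          sSup ((fun t => ∑ i, a i * t i) '' {t | φ t = 1}) = 1) ∧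
        p = l • a}
      = ⋃ t0 ∈ F, {a : Fin n → ℝ | ∀ t, 1 + ∑ i, a i * (t i - t0 i) ≤ max (φ t) 1} := by
  ext p
  simp only [mem_iUnion, exists_prop]
  constructor
  · rintro ⟨l, a, hl₀, hl₁, ha, rfl⟩
    obtain ⟨t₀, ht₀F, hat₀⟩ := exists_dotProduct_eq_one_of_mem_gammaSet hFc ha
    have hle := dotProduct_le_mul_of_le_on_levelSet hhom hnonneg hexh ha.1 zero_le_one
      fun t => dotProduct_le_one_of_mem_gammaSet ha
    exact ⟨t₀, ht₀F, one_add_smul_dotProduct_sub_le_max hl₀ hl₁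
      (fun t => (hle t).trans_eq (one_mul _)) hat₀⟩
  · rintro ⟨t₀, ht₀F, hp⟩
    exact exists_smul_mem_gammaSet_of_subgradient hconv hhom hnonneg hmono hexh hFL ht₀F hp
end

section
/- With φ, L, Γ, Θ as above, if a ∈ ω(F, φ₁) (i.e. there exists t⁰ ∈ F with φ₁(t) ≥ 1 + ⟨a, t - t⁰⟩ for all t), then ⟨a, t⁰⟩ ≤ 1 and ⟨a, t⁰⟩ ≥ ⟨a, t⟩ for all t ∈ L; consequently a ∈ Θ_F. -/
/-!
Testing the subgradient inequality of `φ₁ = max φ 1` at points with `φ t ≤ 1` shows that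
`⟨a, ·⟩` attains its maximum over the sublevel set `{φ ≤ 1}` at `t⁰`; testing it at `2 t⁰` gives
`s := ⟨a, t⁰⟩ ≤ 1`, and testing it at `0` gives `0 ≤ s`. If `s > 0`, then `a = s • (a / s)` with
`a / s ∈ Γ_F`. If `s = 0`, then `a = 0` because `{φ ≤ 1}` is absorbing, and `a = 0 • b` for a
supporting functional `b` of `{φ ≤ 1}` at `t⁰`, which Hahn–Banach provides. In both cases the
coordinates of the normalised functional are nonnegative because `φ` is monotone.
-/

open Set Matrix

section PosHomogeneous

variable {E : Type*} [AddCommGroup E] [Module ℝ E] {φ : E → ℝ}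

lemma map_zero_of_posHomogeneous (hhom : ∀ c : ℝ, 0 < c → ∀ t, φ (c • t) = c * φ t) :
    φ 0 = 0 := by
  have h := hhom 2 two_pos 0
  rw [smul_zero] at h
  linarith

lemma exists_pos_smul_le_one_of_posHomogeneous
    (hhom : ∀ c : ℝ, 0 < c → ∀ t, φ (c • t) = c * φ t) (v : E) :
    ∃ c : ℝ, 0 < c ∧ φ (c • v) ≤ 1 := by
  refine ⟨(|φ v| + 1)⁻¹, by positivity, ?_⟩
  rw [hhom _ (by positivity), inv_mul_le_iff₀ (by positivity)]
  linarith [le_abs_self (φ v)]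

end PosHomogeneous

/-- Separate `x₀` from the open convex set `{φ < 1} ∋ 0`; homogeneity carries the bound from
`{φ < 1}` over to `{φ ≤ 1}`. -/
lemma exists_strongDual_isMaxOn_of_convexOn {E : Type*} [NormedAddCommGroup E]
    [NormedSpace ℝ E] [FiniteDimensional ℝ E] {φ : E → ℝ} {x₀ : E}
    (hconv : ConvexOn ℝ univ φ) (hhom : ∀ c : ℝ, 0 < c → ∀ t, φ (c • t) = c * φ t)
    (hx₀ : φ x₀ = 1) :
    ∃ f : StrongDual ℝ E, f x₀ = 1 ∧ IsMaxOn f {x | φ x ≤ 1} x₀ := by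
  have hcont : Continuous φ := continuousOn_univ.1 (hconv.continuousOn isOpen_univ)
  have hconvex : Convex ℝ {x | φ x < 1} := by simpa using hconv.convex_lt 1
  obtain ⟨f, hf₁, hf⟩ := separate_convex_open_set
    (by simp [map_zero_of_posHomogeneous hhom]) hconvex (isOpen_lt hcont continuous_const)
    (by simp [hx₀] : x₀ ∉ {x | φ x < 1})
  refine ⟨f, hf₁, isMaxOn_iff.2 fun x (hx : φ x ≤ 1) => ?_⟩
  by_contra! hlt
  rw [hf₁] at hlt
  have hc : 0 < (f x)⁻¹ := by positivity
  have hmem : φ ((f x)⁻¹ • x) < 1 := by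
    rw [hhom _ hc]
    calc (f x)⁻¹ * φ x ≤ (f x)⁻¹ := mul_le_of_le_one_right hc.le hx
      _ < 1 := inv_lt_one_of_one_lt₀ hlt
  have := hf _ hmem
  rw [map_smul, smul_eq_mul, inv_mul_cancel₀ (by positivity)] at this
  exact this.false

section DotProduct

variable {ι : Type*} [Fintype ι] {φ : (ι → ℝ) → ℝ} {a b t₀ : ι → ℝ}

lemma exists_isMaxOn_dotProduct_of_convexOn (hconv : ConvexOn ℝ univ φ)
    (hhom : ∀ c : ℝ, 0 < c → ∀ t, φ (c • t) = c * φ t) (ht₀ : φ t₀ = 1) :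
    ∃ b : ι → ℝ, b ⬝ᵥ t₀ = 1 ∧ IsMaxOn (b ⬝ᵥ ·) {t | φ t ≤ 1} t₀ := by
  classical
  obtain ⟨f, hf₁, hf⟩ := exists_strongDual_isMaxOn_of_convexOn hconv hhom ht₀
  have hfb : (f : (ι → ℝ) → ℝ) = ((dotProductEquiv ℝ ι).symm f ⬝ᵥ ·) := by
    ext t
    exact (LinearMap.congr_fun ((dotProductEquiv ℝ ι).apply_symm_apply f) t).symm
  exact ⟨_, hfb ▸ hf₁, hfb ▸ hf⟩

lemma isMaxOn_dotProduct_of_subgradient (hsub : ∀ t, 1 + a ⬝ᵥ (t - t₀) ≤ max (φ t) 1) :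
    IsMaxOn (a ⬝ᵥ ·) {t | φ t ≤ 1} t₀ :=
  isMaxOn_iff.2 fun t (ht : φ t ≤ 1) => by
    have h := hsub t
    rw [max_eq_right ht, dotProduct_sub] at h
    linarith

lemma dotProduct_le_one_of_subgradient (hhom : ∀ c : ℝ, 0 < c → ∀ t, φ (c • t) = c * φ t)
    (ht₀ : φ t₀ = 1) (hsub : ∀ t, 1 + a ⬝ᵥ (t - t₀) ≤ max (φ t) 1) : a ⬝ᵥ t₀ ≤ 1 := by
  have h := hsub ((2 : ℝ) • t₀)
  rw [hhom 2 two_pos, ht₀, two_smul, add_sub_cancel_right] at h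
  norm_num at h
  linarith

lemma dotProduct_nonneg_of_isMaxOn (hhom : ∀ c : ℝ, 0 < c → ∀ t, φ (c • t) = c * φ t)
    (hmax : IsMaxOn (a ⬝ᵥ ·) {t | φ t ≤ 1} t₀) : 0 ≤ a ⬝ᵥ t₀ := by
  simpa using isMaxOn_iff.1 hmax 0 (by simp [map_zero_of_posHomogeneous hhom])

lemma nonneg_of_isMaxOn_dotProduct (hmono : Monotone φ) (ht₀ : φ t₀ ≤ 1)
    (hmax : IsMaxOn (a ⬝ᵥ ·) {t | φ t ≤ 1} t₀) (i : ι) : 0 ≤ a i := by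
  classical
  have hle : φ (t₀ - Pi.single i 1) ≤ 1 :=
    (hmono (sub_le_self _ (Pi.single_nonneg.2 zero_le_one))).trans ht₀
  have h := isMaxOn_iff.1 hmax _ hle
  simp only [dotProduct_sub, dotProduct_single, mul_one] at h
  linarith

lemma eq_zero_of_isMaxOn_dotProduct {S : Set (ι → ℝ)} (hS : ∀ v, ∃ c : ℝ, 0 < c ∧ c • v ∈ S)
    (hmax : IsMaxOn (a ⬝ᵥ ·) S t₀) (ha₀ : a ⬝ᵥ t₀ = 0) : a = 0 := by
  obtain ⟨c, hc, hcS⟩ := hS a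
  have h := isMaxOn_iff.1 hmax _ hcS
  rw [dotProduct_smul, smul_eq_mul, ha₀] at h
  refine dotProduct_self_eq_zero.1 (le_antisymm (nonpos_of_mul_nonpos_right h hc) ?_)
  simpa using dotProduct_self_star_nonneg a

lemma exists_eq_smul_isMaxOn_dotProduct {S : Set (ι → ℝ)}
    (hS : ∀ v, ∃ c : ℝ, 0 < c ∧ c • v ∈ S) (hmax : IsMaxOn (a ⬝ᵥ ·) S t₀)
    (ha₀ : 0 ≤ a ⬝ᵥ t₀) (hb₁ : b ⬝ᵥ t₀ = 1) (hb : IsMaxOn (b ⬝ᵥ ·) S t₀) :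
    ∃ b' : ι → ℝ, b' ⬝ᵥ t₀ = 1 ∧ IsMaxOn (b' ⬝ᵥ ·) S t₀ ∧ a = (a ⬝ᵥ t₀) • b' := by
  rcases ha₀.eq_or_lt with ha₀ | ha₀
  · exact ⟨b, hb₁, hb, by rw [← ha₀, zero_smul, eq_zero_of_isMaxOn_dotProduct hS hmax ha₀.symm]⟩
  refine ⟨(a ⬝ᵥ t₀)⁻¹ • a, ?_, isMaxOn_iff.2 fun t ht => ?_, ?_⟩
  · rw [smul_dotProduct, smul_eq_mul, inv_mul_cancel₀ ha₀.ne']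
  · simp only [smul_dotProduct, smul_eq_mul]
    exact mul_le_mul_of_nonneg_left (isMaxOn_iff.1 hmax t ht) (inv_nonneg.2 ha₀.le)
  · rw [smul_smul, mul_inv_cancel₀ ha₀.ne', one_smul]

lemma sSup_image_dotProduct_eq_one {S : Set (ι → ℝ)} (hS : S ⊆ {t | φ t = 1}) (ht₀ : t₀ ∈ S)
    (hb₁ : b ⬝ᵥ t₀ = 1) (hb : IsMaxOn (b ⬝ᵥ ·) {t | φ t ≤ 1} t₀) :
    sSup ((b ⬝ᵥ ·) '' S) = 1 := by
  refine IsGreatest.csSup_eq ⟨⟨t₀, ht₀, hb₁⟩, ?_⟩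
  rintro _ ⟨t, ht, rfl⟩
  exact hb₁ ▸ isMaxOn_iff.1 hb t (hS ht).le

end DotProduct

theorem gradient_image_subset_thetaF_general {n : ℕ} (φ : (Fin n → ℝ) → ℝ)
    (hconv : ConvexOn ℝ Set.univ φ)
    (hhom : ∀ c : ℝ, 0 < c → ∀ t, φ (c • t) = c * φ t)
    (hmono : ∀ s t : Fin n → ℝ, (∀ i, s i ≤ t i) → φ s ≤ φ t)
    (F : Set (Fin n → ℝ)) (hFL : F ⊆ {t | φ t = 1})
    (a t0 : Fin n → ℝ) (ht0 : t0 ∈ F)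
    (hsub : ∀ t : Fin n → ℝ, 1 + ∑ i, a i * (t i - t0 i) ≤ max (φ t) 1) :
    (∑ i, a i * t0 i ≤ 1) ∧
    (∀ t : Fin n → ℝ, φ t = 1 → ∑ i, a i * t i ≤ ∑ i, a i * t0 i) ∧
    a ∈ {p : Fin n → ℝ | ∃ l : ℝ, ∃ b : Fin n → ℝ, 0 ≤ l ∧ l ≤ 1 ∧
        ((∀ i, 0 ≤ b i) ∧
          sSup ((fun t => ∑ i, b i * t i) '' F) = 1 ∧
          sSup ((fun t => ∑ i, b i * t i) '' {t | φ t = 1}) = 1) ∧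
        p = l • b} := by
  have hφt₀ : φ t0 = 1 := hFL ht0
  have hmax := isMaxOn_dotProduct_of_subgradient hsub
  have hle_one : a ⬝ᵥ t0 ≤ 1 := dotProduct_le_one_of_subgradient hhom hφt₀ hsub
  refine ⟨hle_one, fun t ht => isMaxOn_iff.1 hmax t ht.le, ?_⟩
  obtain ⟨b₀, hb₀₁, hb₀⟩ := exists_isMaxOn_dotProduct_of_convexOn hconv hhom hφt₀
  obtain ⟨b, hb₁, hb, ha⟩ := exists_eq_smul_isMaxOn_dotProduct
    (exists_pos_smul_le_one_of_posHomogeneous hhom) hmax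
    (dotProduct_nonneg_of_isMaxOn hhom hmax) hb₀₁ hb₀
  exact ⟨a ⬝ᵥ t0, b, dotProduct_nonneg_of_isMaxOn hhom hmax, hle_one,
    ⟨nonneg_of_isMaxOn_dotProduct (fun s t hst => hmono s t hst) hφt₀.le hb,
      sSup_image_dotProduct_eq_one hFL ht0 hb₁ hb,
      sSup_image_dotProduct_eq_one subset_rfl hφt₀ hb₁ hb⟩, ha⟩

/-- If `a` belongs to the gradient image `ω(F, φ₁)`, witnessed by `t⁰ ∈ F` with
`φ₁(t) ≥ 1 + ⟨a, t - t⁰⟩` for all `t`, then `⟨a,t⁰⟩ ≤ 1`, `⟨a,t⁰⟩ ≥ ⟨a,t⟩` for all `t ∈ L`,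
and consequently `a ∈ Θ_F`. -/
theorem gradient_image_subset_thetaF {n : ℕ} (φ : (Fin n → ℝ) → ℝ)
    (hconv : ConvexOn ℝ Set.univ φ)
    (hhom : ∀ c : ℝ, 0 < c → ∀ t, φ (c • t) = c * φ t)
    (hnonneg : ∀ t, 0 ≤ φ t)
    (hmono : ∀ s t : Fin n → ℝ, (∀ i, s i ≤ t i) → φ s ≤ φ t)
    (hexh : ∀ t : Fin n → ℝ, ¬ (∀ i, t i ≤ 0) → 0 < φ t)
    (F : Set (Fin n → ℝ)) (hFc : IsCompact F) (hFL : F ⊆ {t | φ t = 1})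
    (a t0 : Fin n → ℝ) (ht0 : t0 ∈ F)
    (hsub : ∀ t : Fin n → ℝ, 1 + ∑ i, a i * (t i - t0 i) ≤ max (φ t) 1) :
    (∑ i, a i * t0 i ≤ 1) ∧
    (∀ t : Fin n → ℝ, φ t = 1 → ∑ i, a i * t i ≤ ∑ i, a i * t0 i) ∧
    a ∈ {p : Fin n → ℝ | ∃ l : ℝ, ∃ b : Fin n → ℝ, 0 ≤ l ∧ l ≤ 1 ∧
        ((∀ i, 0 ≤ b i) ∧
          sSup ((fun t => ∑ i, b i * t i) '' F) = 1 ∧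
          sSup ((fun t => ∑ i, b i * t i) '' {t | φ t = 1}) = 1) ∧
        p = l • b} :=
  gradient_image_subset_thetaF_general φ hconv hhom hmono F hFL a t0 ht0 hsub
end

section
/- With φ, L as above and E the set of extreme points of L (points of L not lying in the interior of any segment contained in L): if L is contained in {t : t_k ≤ b_k, 1 ≤ k ≤ n} minus the negative orthant for some b ∈ R₊^n, then sup_{t∈L} ⟨a,t⟩ = sup_{t∈E} ⟨a,t⟩ for every a in the closed positive orthant. -/
/-!
The sublevel set `C = {φ ≤ 1}` is closed and bounded above by `b`: any of its points
can be pushed along a nonnegative direction until it meets `L`, and `φ` is monotone. Points with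
`φ < 1` are interior to `C`, so the extreme points of `C` lie on `L`; as `L` is an extreme subset
of `C`, they are exactly the extreme points of `L`. For `x ∈ C` and `δ > 0` the functional
`⟨a + δ, ·⟩` has compact superlevel sets on `C`, so by the Krein–Milman lemma its face of
maximizers contains an extreme point `e` of `C`, and `⟨a, e⟩ ≥ ⟨a, x⟩ - δ ∑ (b - x)`.
-/

open Set Finset

theorem exists_mem_extremePoints_le_of_isCompact_inter {E : Type*} [AddCommGroup E] [Module ℝ E]
    [TopologicalSpace E] [T2Space E] [IsTopologicalAddGroup E] [ContinuousSMul ℝ E]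
    [LocallyConvexSpace ℝ E] {C : Set E} {x : E} (l : StrongDual ℝ E) (hx : x ∈ C)
    (hK : IsCompact (C ∩ {y | l x ≤ l y})) : ∃ e ∈ C.extremePoints ℝ, l x ≤ l e := by
  obtain ⟨z, hzK, hz⟩ := hK.exists_isMaxOn ⟨x, hx, le_refl (l x)⟩ l.continuous.continuousOn
  have hzF : z ∈ l.toExposed C := by
    refine ⟨hzK.1, fun y hy => ?_⟩
    rcases le_or_gt (l x) (l y) with hxy | hyx
    · exact hz ⟨hy, hxy⟩
    · exact hyx.le.trans hzK.2
  have hFK : l.toExposed C ⊆ C ∩ {y | l x ≤ l y} := fun y hy => ⟨hy.1, hy.2 x hx⟩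
  have hF : IsExposed ℝ (C ∩ {y | l x ≤ l y}) (l.toExposed C) :=
    ContinuousLinearMap.toExposed.isExposed.mono inter_subset_left hFK
  obtain ⟨e, he⟩ := (hF.isCompact hK).extremePoints_nonempty ⟨z, hzF⟩
  exact ⟨e, ContinuousLinearMap.toExposed.isExposed.isExtreme.extremePoints_subset_extremePoints
    he, he.1.2 x hx⟩

section Coordinates

variable {ι : Type*} [Fintype ι] {C : Set (ι → ℝ)} {b : ι → ℝ}

theorem IsClosed.isCompact_inter_le_sum_mul (hC : IsClosed C) (hCb : C ⊆ Iic b) {c : ι → ℝ}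
    (hc : ∀ i, 0 < c i) (r : ℝ) : IsCompact (C ∩ {t | r ≤ ∑ i, c i * t i}) := by
  refine (isCompact_Icc (a := fun i => b i - (∑ k, c k * b k - r) / c i) (b := b))
    |>.of_isClosed_subset
    (hC.inter (_root_.isClosed_le continuous_const (by fun_prop)))
    fun t ⟨htC, (hrt : r ≤ _)⟩ => ⟨fun i => show b i - _ ≤ t i from ?_, hCb htC⟩
  have hterm : c i * (b i - t i) ≤ ∑ k, c k * (b k - t k) :=
    single_le_sum (fun k _ => mul_nonneg (hc k).le (sub_nonneg.2 (hCb htC k))) (mem_univ i)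
  have hdiff : ∑ k, c k * (b k - t k) = ∑ k, c k * b k - ∑ k, c k * t k := by
    simp only [mul_sub, sum_sub_distrib]
  rw [sub_le_comm, le_div_iff₀ (hc i), mul_comm]
  linarith

theorem exists_mem_extremePoints_sub_le_sum_mul (hC : IsClosed C) (hCb : C ⊆ Iic b) {a : ι → ℝ}
    (ha : ∀ i, 0 ≤ a i) {x : ι → ℝ} (hx : x ∈ C) {ε : ℝ} (hε : 0 < ε) :
    ∃ e ∈ C.extremePoints ℝ, ∑ i, a i * x i - ε ≤ ∑ i, a i * e i := by
  set D := ∑ i, (b i - x i)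
  have hD : 0 ≤ D := sum_nonneg fun i _ => sub_nonneg.2 (hCb hx i)
  set δ := ε / (D + 1)
  have hδ : 0 < δ := by positivity
  have hδD : δ * D ≤ ε := by
    rw [div_mul_eq_mul_div, div_le_iff₀ (by positivity)]
    nlinarith
  set l : StrongDual ℝ (ι → ℝ) := ∑ i, (a i + δ) • ContinuousLinearMap.proj i
  have hl : ∀ t, l t = ∑ i, (a i + δ) * t i := fun t => by simp [l]
  have hsplit : ∀ t : ι → ℝ, ∑ i, (a i + δ) * t i = ∑ i, a i * t i + δ * ∑ i, t i := fun t => by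
    simp only [add_mul, sum_add_distrib, mul_sum]
  have hK : IsCompact (C ∩ {t | l x ≤ l t}) := by
    simpa only [hl] using hC.isCompact_inter_le_sum_mul hCb (fun i => by linarith [ha i]) (l x)
  obtain ⟨e, he, hle⟩ := exists_mem_extremePoints_le_of_isCompact_inter l hx hK
  refine ⟨e, he, ?_⟩
  have heb : ∑ i, e i ≤ ∑ i, b i := sum_le_sum fun i _ => hCb (extremePoints_subset he) i
  have hDeq : D = ∑ i, b i - ∑ i, x i := sum_sub_distrib ..
  rw [hl, hl, hsplit, hsplit] at hle
  nlinarith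

theorem sSup_image_sum_mul_eq_of_extremePoints_subset (hC : IsClosed C) (hCb : C ⊆ Iic b)
    {a : ι → ℝ} (ha : ∀ i, 0 ≤ a i) {L : Set (ι → ℝ)} (hL : L.Nonempty) (hLC : L ⊆ C)
    (hEL : C.extremePoints ℝ ⊆ L) :
    sSup ((fun t => ∑ i, a i * t i) '' L) =
      sSup ((fun t => ∑ i, a i * t i) '' C.extremePoints ℝ) := by
  set f := fun t : ι → ℝ => ∑ i, a i * t i
  have hbdd : BddAbove (f '' L) := ⟨f b, by
    rintro _ ⟨t, ht, rfl⟩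
    exact sum_le_sum fun i _ => mul_le_mul_of_nonneg_left (hCb (hLC ht) i) (ha i)⟩
  obtain ⟨e, he, -⟩ := exists_mem_extremePoints_sub_le_sum_mul hC hCb ha (hLC hL.some_mem) one_pos
  refine le_antisymm (csSup_le (hL.image f) ?_)
    (csSup_le_csSup hbdd ⟨f e, e, he, rfl⟩ (image_mono hEL))
  rintro _ ⟨y, hy, rfl⟩
  refine le_of_forall_sub_le fun ε hε => ?_
  obtain ⟨e, he, hle⟩ := exists_mem_extremePoints_sub_le_sum_mul hC hCb ha (hLC hy) hε
  exact hle.trans (le_csSup (hbdd.mono (image_mono hEL)) ⟨e, he, rfl⟩)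

end Coordinates

section LevelSets

theorem ConvexOn.isExtreme_setOf_eq {𝕜 E : Type*} [Field 𝕜] [LinearOrder 𝕜]
    [IsStrictOrderedRing 𝕜] [AddCommGroup E] [Module 𝕜 E] {φ : E → 𝕜} (hφ : ConvexOn 𝕜 univ φ)
    (r : 𝕜) :
    IsExtreme 𝕜 {x | φ x ≤ r} {x | φ x = r} := by
  refine ⟨fun x hx => le_of_eq hx,
    fun y (hy : φ y ≤ r) z (hz : φ z ≤ r) x (hx : φ x = r) hxyz => ?_⟩
  obtain ⟨α, β, hα, hβ, hαβ, rfl⟩ := hxyz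
  have h := hφ.2 (mem_univ y) (mem_univ z) hα.le hβ.le hαβ
  simp only [smul_eq_mul] at h
  refine hy.antisymm (not_lt.1 fun hlt => ?_)
  have hr : α * r + β * r = r := by rw [← add_mul, hαβ, one_mul]
  linarith [mul_lt_mul_of_pos_left hlt hα, mul_le_mul_of_nonneg_left hz hβ.le]

variable {E : Type*} [AddCommGroup E] [Module ℝ E] {φ : E → ℝ}

theorem ConvexOn.map_add_le_of_map_smul (hconv : ConvexOn ℝ univ φ)
    (hhom : ∀ c : ℝ, 0 < c → ∀ t, φ (c • t) = c * φ t) (x y : E) :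
    φ (x + y) ≤ φ x + φ y := by
  have h := hconv.2 (mem_univ x) (mem_univ y) (by norm_num : (0 : ℝ) ≤ 1 / 2)
    (by norm_num : (0 : ℝ) ≤ 1 / 2) (by norm_num)
  have h2 := hhom 2 two_pos ((1 / 2 : ℝ) • x + (1 / 2 : ℝ) • y)
  rw [smul_add, smul_smul, smul_smul] at h2
  norm_num at h2
  simp only [smul_eq_mul] at h
  linarith

theorem exists_nonneg_map_eq_one [Lattice E] [PosSMulMono ℝ E]
    (hhom : ∀ c : ℝ, 0 < c → ∀ t, φ (c • t) = c * φ t) (hmono : Monotone φ) {u : E}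
    (hu : φ u = 1) : ∃ w, 0 ≤ w ∧ φ w = 1 := by
  have hpos : 0 < φ (u ⊔ 0) := by linarith [hmono (le_sup_left : u ≤ u ⊔ 0)]
  refine ⟨(φ (u ⊔ 0))⁻¹ • (u ⊔ 0), smul_nonneg (inv_nonneg.2 hpos.le) le_sup_right, ?_⟩
  rw [hhom _ (inv_pos.2 hpos), inv_mul_cancel₀ hpos.ne']

variable [TopologicalSpace E]

theorem extremePoints_setOf_le_subset [IsTopologicalAddGroup E] [ContinuousSMul ℝ E]
    [Nontrivial E] (hφ : Continuous φ) (r : ℝ) :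
    {x | φ x ≤ r}.extremePoints ℝ ⊆ {x | φ x = r} := by
  intro e he
  refine (he.1 : φ e ≤ r).eq_of_not_lt fun hlt => ?_
  have hint : e ∈ interior {x | φ x ≤ r} :=
    interior_maximal (fun x (hx : φ x < r) => hx.le) (isOpen_lt hφ continuous_const) hlt
  exact disjoint_left.1 (disjoint_interior_extremePoints _) hint he

theorem ConvexOn.extremePoints_setOf_eq [IsTopologicalAddGroup E] [ContinuousSMul ℝ E]
    [Nontrivial E] (hconv : ConvexOn ℝ univ φ) (hφ : Continuous φ) (r : ℝ) :
    {x | φ x = r}.extremePoints ℝ = {x | φ x ≤ r}.extremePoints ℝ := by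
  rw [(hconv.isExtreme_setOf_eq r).extremePoints_eq,
    inter_eq_right.2 (extremePoints_setOf_le_subset hφ r)]

theorem exists_nonneg_add_smul_eq_one [ContinuousAdd E] [ContinuousSMul ℝ E]
    (hhom : ∀ c : ℝ, 0 < c → ∀ t, φ (c • t) = c * φ t) (hφ : Continuous φ)
    (hsub : ∀ x y, φ (x + y) ≤ φ x + φ y) {w : E} (hw : φ w = 1) {t : E} (ht : φ t ≤ 1) :
    ∃ s : ℝ, 0 ≤ s ∧ φ (t + s • w) = 1 := by
  set s₁ := 1 + |φ (-t)|
  have hs₁ : 0 < s₁ := by positivity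
  have hg : Continuous fun s : ℝ => φ (t + s • w) := by fun_prop
  have hgs₁ : 1 ≤ φ (t + s₁ • w) := by
    have h := hsub (t + s₁ • w) (-t)
    rw [add_neg_cancel_comm, hhom s₁ hs₁, hw] at h
    linarith [le_abs_self (φ (-t))]
  obtain ⟨s, hs, hgs⟩ := intermediate_value_Icc hs₁.le hg.continuousOn
    ⟨by simpa using ht, hgs₁⟩
  exact ⟨s, hs.1, hgs⟩

theorem setOf_le_one_subset_of_setOf_eq_one_subset [Lattice E] [IsOrderedAddMonoid E]
    [PosSMulMono ℝ E] [ContinuousAdd E] [ContinuousSMul ℝ E]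
    (hhom : ∀ c : ℝ, 0 < c → ∀ t, φ (c • t) = c * φ t) (hφ : Continuous φ)
    (hsub : ∀ x y, φ (x + y) ≤ φ x + φ y) (hmono : Monotone φ)
    (hne : {x | φ x = 1}.Nonempty) {S : Set E} (hS : IsLowerSet S) (hLS : {x | φ x = 1} ⊆ S) :
    {x | φ x ≤ 1} ⊆ S := by
  obtain ⟨w, hw₀, hw⟩ := exists_nonneg_map_eq_one hhom hmono hne.some_mem
  intro t ht
  obtain ⟨s, hs, hts⟩ := exists_nonneg_add_smul_eq_one hhom hφ hsub hw ht
  exact hS (le_add_of_nonneg_right (smul_nonneg hs hw₀)) (hLS hts)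

end LevelSets

theorem sup_on_L_eq_sup_on_extremePoints_general {n : ℕ} (φ : (Fin n → ℝ) → ℝ)
    (hconv : ConvexOn ℝ Set.univ φ)
    (hhom : ∀ c : ℝ, 0 < c → ∀ t, φ (c • t) = c * φ t)
    (hmono : ∀ s t : Fin n → ℝ, (∀ i, s i ≤ t i) → φ s ≤ φ t)
    (b : Fin n → ℝ)
    (hL : {t : Fin n → ℝ | φ t = 1} ⊆
      {t : Fin n → ℝ | ∀ k, t k ≤ b k} \ {t : Fin n → ℝ | ∀ k, t k < 0}) :
    ∀ a : Fin n → ℝ, (∀ i, 0 ≤ a i) →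
      sSup ((fun t : Fin n → ℝ => ∑ i, a i * t i) '' {t | φ t = 1}) =
      sSup ((fun t : Fin n → ℝ => ∑ i, a i * t i) ''
        Set.extremePoints ℝ {t : Fin n → ℝ | φ t = 1}) := by
  intro a ha
  obtain hempty | hne := eq_empty_or_nonempty {t : Fin n → ℝ | φ t = 1}
  · simp [hempty]
  have hφ : Continuous φ := continuousOn_univ.1 (hconv.continuousOn isOpen_univ)
  have hφ₀ : φ 0 = 0 := by
    have h := hhom 2 two_pos 0
    rw [smul_zero] at h
    linarith
  have : Nontrivial (Fin n → ℝ) :=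
    nontrivial_of_ne hne.some 0 fun h => by simpa [h, hφ₀] using hne.some_mem
  have hCb : {t | φ t ≤ 1} ⊆ Iic b :=
    setOf_le_one_subset_of_setOf_eq_one_subset hhom hφ (hconv.map_add_le_of_map_smul hhom)
      (fun s t => hmono s t) hne (isLowerSet_Iic b) fun t ht => (hL ht).1
  rw [hconv.extremePoints_setOf_eq hφ 1]
  exact sSup_image_sum_mul_eq_of_extremePoints_subset (isClosed_le hφ continuous_const) hCb ha hne
    (fun t ht => le_of_eq ht) (extremePoints_setOf_le_subset hφ 1)

/-- If the level set `L = {φ = 1}` is contained in `{t : t_k ≤ b_k ∀k}` minus the open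
negative orthant for some `b ∈ ℝ₊ⁿ`, then for every `a` in the closed positive orthant the
supremum of `⟨a,·⟩` over `L` equals its supremum over the extreme points `E` of `L`. -/
theorem sup_on_L_eq_sup_on_extremePoints {n : ℕ} (φ : (Fin n → ℝ) → ℝ)
    (hconv : ConvexOn ℝ Set.univ φ)
    (hhom : ∀ c : ℝ, 0 < c → ∀ t, φ (c • t) = c * φ t)
    (hnonneg : ∀ t, 0 ≤ φ t)
    (hmono : ∀ s t : Fin n → ℝ, (∀ i, s i ≤ t i) → φ s ≤ φ t)
    (b : Fin n → ℝ) (hb : ∀ k, 0 ≤ b k)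
    (hL : {t : Fin n → ℝ | φ t = 1} ⊆
      {t : Fin n → ℝ | ∀ k, t k ≤ b k} \ {t : Fin n → ℝ | ∀ k, t k < 0}) :
    ∀ a : Fin n → ℝ, (∀ i, 0 ≤ a i) →
      sSup ((fun t : Fin n → ℝ => ∑ i, a i * t i) '' {t | φ t = 1}) =
      sSup ((fun t : Fin n → ℝ => ∑ i, a i * t i) ''
        Set.extremePoints ℝ {t : Fin n → ℝ | φ t = 1}) :=
  sup_on_L_eq_sup_on_extremePoints_general φ hconv hhom hmono b hL
end
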